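/- Fix 0 < s < 1 and define J_s(r,r̃) = (r/r̃)·min{1, ((3-s)r̃-2)/((1-s)r-2)} on the rectangle K(s) = [2, 6/(3-4s)_+] × [max{1, 6/(7-4s)}, 2/(2-s)] (with 6/0 interpreted as ∞). Then sup_{(r,r̃)∈K(s)} J_s(r,r̃) equals (3-s)/(1-s) if 1/2 ≤ s < 1, equals (7-4s)/(3-4s) if 1/4 ≤ s ≤ 1/2, and equals 6/(3-4s) if 0 < s ≤ 1/4. -/

import Mathlib

/-- The rectangle `K(s) = [2, 6/(3-4s)₊] × [max{1, 6/(7-4s)}, 2/(2-s)]`,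
where the upper bound `6/(3-4s)₊` is interpreted as `∞` (no constraint)
when `s ≥ 3/4`. -/
def Krect (s : ℝ) : Set (ℝ × ℝ) :=
  {p | 2 ≤ p.1 ∧ (s < 3 / 4 → p.1 ≤ 6 / (3 - 4 * s)) ∧
    max 1 (6 / (7 - 4 * s)) ≤ p.2 ∧ p.2 ≤ 2 / (2 - s)}

/-- `J_s(r,r̃) = (r/r̃)·min{1, ((3-s)r̃-2)/((1-s)r-2)}`. -/
noncomputable def Jfun (s : ℝ) (p : ℝ × ℝ) : ℝ :=
  (p.1 / p.2) * min 1 (((3 - s) * p.2 - 2) / ((1 - s) * p.1 - 2))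

/-!
In the variables `x = (1-s)r`, `y = (3-s)r̃` one has
`J_s = (3-s)/(1-s) · (x/y) · min{1, (y-2)/(x-2)}`, and `(x/y) · min{1, (y-2)/(x-2)} ≤ 1`
as soon as `y ≥ 2`, with equality on the diagonal `x = y > 2`. Independently `J_s ≤ r/r̃`,
with equality when `2 < x ≤ y`, and `r/r̃` is largest at `r = 6/(3-4s)`, `r̃ = max{1, 6/(7-4s)}`.
For `s ≥ 1/2` the diagonal meets `K(s)` at `r̃ = 6/(7-4s)` and the first bound is attained;
for `s < 1/2` the corner `(6/(3-4s), max{1, 6/(7-4s)})` satisfies `2 < x ≤ y` and the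
second bound is attained.
-/

lemma min_one_div_sub_two_eq_one {x y : ℝ} (hx : 2 < x) (hxy : x ≤ y) :
    min 1 ((y - 2) / (x - 2)) = 1 :=
  min_eq_left ((one_le_div (by linarith)).2 (by linarith))

lemma div_mul_min_one_div_sub_two_le_one {x y : ℝ} (hx : 0 < x) (hy : 2 ≤ y) :
    x / y * min 1 ((y - 2) / (x - 2)) ≤ 1 := by
  have hy0 : 0 < y := by linarith
  rcases le_or_gt x y with hxy | hyx
  · calc x / y * min 1 ((y - 2) / (x - 2)) ≤ x / y * 1 := by gcongr; exact min_le_left _ _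
      _ ≤ 1 := by rw [mul_one, div_le_one hy0]; exact hxy
  · have hx2 : 0 < x - 2 := by linarith
    calc x / y * min 1 ((y - 2) / (x - 2)) ≤ x / y * ((y - 2) / (x - 2)) := by
          gcongr; exact min_le_right _ _
      _ ≤ 1 := by
          rw [div_mul_div_comm, div_le_one (by positivity)]
          nlinarith

section Jfun

variable {s : ℝ} {p : ℝ × ℝ}

lemma Jfun_le_div (hp₁ : 0 ≤ p.1) (hp₂ : 0 ≤ p.2) : Jfun s p ≤ p.1 / p.2 :=
  mul_le_of_le_one_right (div_nonneg hp₁ hp₂) (min_le_left _ _)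

lemma Jfun_eq_div (hx : 2 < (1 - s) * p.1) (hxy : (1 - s) * p.1 ≤ (3 - s) * p.2) :
    Jfun s p = p.1 / p.2 := by
  rw [Jfun, min_one_div_sub_two_eq_one hx hxy, mul_one]

lemma Jfun_le_three_sub_div_one_sub (hs : s < 1) (hp₁ : 0 < p.1) (hp₂ : 1 ≤ p.2) :
    Jfun s p ≤ (3 - s) / (1 - s) := by
  have h1s : 0 < 1 - s := by linarith
  have h3s : 0 < 3 - s := by linarith
  have hJ : Jfun s p = (3 - s) / (1 - s) *
      ((1 - s) * p.1 / ((3 - s) * p.2) * min 1 (((3 - s) * p.2 - 2) / ((1 - s) * p.1 - 2))) := by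
    rw [Jfun]
    field_simp
  rw [hJ]
  refine mul_le_of_le_one_right (by positivity) (div_mul_min_one_div_sub_two_le_one
    (by positivity) (by nlinarith))

end Jfun

section Krect

variable {s : ℝ}

lemma div_le_of_mem_Krect {p : ℝ × ℝ} (hs : s < 3 / 4) (hp : p ∈ Krect s) :
    p.1 / p.2 ≤ 6 / (3 - 4 * s) / max 1 (6 / (7 - 4 * s)) := by
  obtain ⟨hr, hr_le, hp₂, -⟩ := hp
  gcongr
  · linarith [hr_le hs]
  · exact hr_le hs

lemma isGreatest_Jfun_of_half_le (hs1 : s < 1) (hs : 1 / 2 ≤ s) :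
    IsGreatest (Jfun s '' Krect s) ((3 - s) / (1 - s)) := by
  have h1s : 0 < 1 - s := by linarith
  have h7s : 0 < 7 - 4 * s := by linarith
  set t := 6 / (7 - 4 * s) with ht
  have ht1 : 1 ≤ t := by rw [ht, le_div_iff₀ h7s]; linarith
  have hdiag : (1 - s) * ((3 - s) * t / (1 - s)) = (3 - s) * t := by field_simp
  refine ⟨⟨((3 - s) * t / (1 - s), t), ⟨?_, fun _ => ?_, ?_, ?_⟩, ?_⟩, ?_⟩
  · rw [le_div_iff₀ h1s]; nlinarith
  · rw [ht, mul_div_assoc', div_div, div_le_div_iff₀ (by positivity) (by linarith)]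
    nlinarith
  · exact max_le ht1 le_rfl
  · rw [ht, div_le_div_iff₀ h7s (by linarith)]; linarith
  · rw [Jfun_eq_div (by rw [hdiag]; nlinarith) hdiag.le]
    field_simp
  · rintro _ ⟨p, ⟨hp₁, -, hp₂, -⟩, rfl⟩
    exact Jfun_le_three_sub_div_one_sub hs1 (by linarith) (le_of_max_le_left hp₂)

lemma isGreatest_Jfun_of_lt_half (hs0 : 0 < s) (hs : s < 1 / 2) :
    IsGreatest (Jfun s '' Krect s) (6 / (3 - 4 * s) / max 1 (6 / (7 - 4 * s))) := by
  have h3s : 0 < 3 - 4 * s := by linarith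
  have h7s : 0 < 7 - 4 * s := by linarith
  set t := max 1 (6 / (7 - 4 * s))
  refine ⟨⟨(6 / (3 - 4 * s), t), ⟨?_, fun _ => le_rfl, le_rfl, ?_⟩, ?_⟩, ?_⟩
  · rw [le_div_iff₀ h3s]; linarith
  · refine max_le ?_ ?_
    · rw [le_div_iff₀ (by linarith)]; linarith
    · rw [div_le_div_iff₀ h7s (by linarith)]; linarith
  · refine Jfun_eq_div ?_ ?_
    · rw [mul_div_assoc', lt_div_iff₀ h3s]; linarith
    · calc (1 - s) * (6 / (3 - 4 * s)) ≤ (3 - s) * (6 / (7 - 4 * s)) := by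
            rw [mul_div_assoc', mul_div_assoc', div_le_div_iff₀ h3s h7s]; nlinarith
        _ ≤ (3 - s) * t := by gcongr; exacts [by linarith, le_max_right _ _]
  · rintro _ ⟨p, hp, rfl⟩
    have hp₂ : 1 ≤ p.2 := le_of_max_le_left hp.2.2.1
    exact (Jfun_le_div (by linarith [hp.1]) (by linarith)).trans
      (div_le_of_mem_Krect (by linarith) hp)

end Krect

theorem sup_Jfun (s : ℝ) (hs : 0 < s) (hs1 : s < 1) :
    sSup (Jfun s '' Krect s) =
      if 1 / 2 ≤ s then (3 - s) / (1 - s)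
      else if 1 / 4 ≤ s then (7 - 4 * s) / (3 - 4 * s)
      else 6 / (3 - 4 * s) := by
  split_ifs with h_half h_quarter
  · exact (isGreatest_Jfun_of_half_le hs1 h_half).csSup_eq
  · rw [(isGreatest_Jfun_of_lt_half hs (not_le.1 h_half)).csSup_eq,
      max_eq_right ((one_le_div (by linarith)).2 (by linarith))]
    field_simp
  · rw [(isGreatest_Jfun_of_lt_half hs (by linarith)).csSup_eq,
      max_eq_left ((div_le_one (by linarith)).2 (by linarith)), div_one]
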